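/- For n = 2m even with m ≥ 1, the number of permutations of {1,…,n} whose arc diagram contains an m-nesting but no (m+1)-nesting, where the nesting number attains its maximum possible value m, equals 2(m+1)! − (m−1)! − 1. -/

import Mathlib

/-- Upper k-crossing: a_1 < ... < a_k ≤ σ(a_1) < ... < σ(a_k). -/
def IsUpperCrossing (n k : ℕ) (σ : Equiv.Perm (Fin n)) (a : Fin k → Fin n) : Prop :=
  StrictMono a ∧ StrictMono (fun i => σ (a i)) ∧ ∀ i j, (a i : ℕ) ≤ (σ (a j) : ℕ)

/-- Lower k-crossing: σ(a_1) < ... < σ(a_k) < a_1 < ... < a_k. -/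
def IsLowerCrossing (n k : ℕ) (σ : Equiv.Perm (Fin n)) (a : Fin k → Fin n) : Prop :=
  StrictMono a ∧ StrictMono (fun i => σ (a i)) ∧ ∀ i j, (σ (a i) : ℕ) < (a j : ℕ)

/-- Upper (enhanced) k-nesting: a_1 < ... < a_k ≤ σ(a_k) < ... < σ(a_1). -/
def IsUpperNesting (n k : ℕ) (σ : Equiv.Perm (Fin n)) (a : Fin k → Fin n) : Prop :=
  StrictMono a ∧ StrictAnti (fun i => σ (a i)) ∧ ∀ i j, (a i : ℕ) ≤ (σ (a j) : ℕ)

/-- Lower k-nesting: σ(a_1) < ... < σ(a_k) < a_k < ... < a_1, reindexed so that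
`a` is increasing and `σ ∘ a` is decreasing, with every σ-value below every position. -/
def IsLowerNesting (n k : ℕ) (σ : Equiv.Perm (Fin n)) (a : Fin k → Fin n) : Prop :=
  StrictMono a ∧ StrictAnti (fun i => σ (a i)) ∧ ∀ i j, (σ (a i) : ℕ) < (a j : ℕ)

/-- σ contains a k-crossing. -/
def HasCrossing (n k : ℕ) (σ : Equiv.Perm (Fin n)) : Prop :=
  ∃ a : Fin k → Fin n, IsUpperCrossing n k σ a ∨ IsLowerCrossing n k σ a

/-- σ contains a k-nesting. -/
def HasNesting (n k : ℕ) (σ : Equiv.Perm (Fin n)) : Prop :=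
  ∃ a : Fin k → Fin n, IsUpperNesting n k σ a ∨ IsLowerNesting n k σ a

/-- The crossing number of σ: the largest k such that σ has a k-crossing. -/
noncomputable def crossNum (n : ℕ) (σ : Equiv.Perm (Fin n)) : ℕ :=
  sSup {k | HasCrossing n k σ}

/-- The nesting number of σ: the largest k such that σ has a k-nesting. -/
noncomputable def nestNum (n : ℕ) (σ : Equiv.Perm (Fin n)) : ℕ :=
  sSup {k | HasNesting n k σ}

open Finset Equiv

lemma smono_gap {k n : ℕ} {g : Fin k → Fin n} (h : StrictMono g) :
    ∀ d : ℕ, ∀ i j : Fin k, (i : ℕ) + d = (j : ℕ) → (g i : ℕ) + d ≤ (g j : ℕ) := by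
  intro d
  induction d with
  | zero =>
    intro i j hij
    have : i = j := Fin.ext (by omega)
    subst this; omega
  | succ d ih =>
    intro i j hij
    have hj : (i : ℕ) + d < k := by omega
    have h1 := ih i ⟨(i : ℕ) + d, hj⟩ rfl
    have h2 : g ⟨(i : ℕ) + d, hj⟩ < g j := h (by rw [Fin.lt_def]; simp; omega)
    rw [Fin.lt_def] at h2
    simp at h1 h2
    omega

lemma santi_gap {k n : ℕ} {g : Fin k → Fin n} (h : StrictAnti g) :
    ∀ d : ℕ, ∀ i j : Fin k, (i : ℕ) + d = (j : ℕ) → (g j : ℕ) + d ≤ (g i : ℕ) := by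
  intro d
  induction d with
  | zero =>
    intro i j hij
    have : i = j := Fin.ext (by omega)
    subst this; omega
  | succ d ih =>
    intro i j hij
    have hj : (i : ℕ) + d < k := by omega
    have h1 := ih i ⟨(i : ℕ) + d, hj⟩ rfl
    have h2 : g j < g ⟨(i : ℕ) + d, hj⟩ := h (by rw [Fin.lt_def]; simp; omega)
    rw [Fin.lt_def] at h2
    simp at h1 h2
    omega

lemma chain_gap (f : ℕ → ℕ) (M : ℕ) (h : ∀ p q, p < q → q < M → f q < f p) :
    ∀ d p q, p + d = q → q < M → f q + d ≤ f p := by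
  intro d
  induction d with
  | zero =>
    intro p q h1 h2
    obtain rfl : p = q := by omega
    omega
  | succ d ih =>
    intro p q h1 h2
    have h3 := h (p + d) q (by omega) h2
    have h4 := ih p (p + d) rfl (by omega)
    omega

lemma threshold (M : ℕ) (f v1 v2 : ℕ → ℕ)
    (h : ∀ p, p < M → f p = v1 p ∨ f p = v2 p)
    (hmono : ∀ p q, p < q → q < M → f p = v2 p → f q = v2 q) :
    ∃ c, c ≤ M ∧ (∀ p, p < c → f p = v1 p) ∧ (∀ p, c ≤ p → p < M → f p = v2 p) := by
  classical
  have hex : ∃ p, M ≤ p ∨ f p = v2 p := ⟨M, Or.inl le_rfl⟩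
  refine ⟨Nat.find hex, Nat.find_le (Or.inl le_rfl), ?_, ?_⟩
  · intro p hp
    have hmin := Nat.find_min hex hp
    push_neg at hmin
    rcases h p (by omega) with h1 | h2
    · exact h1
    · exact absurd h2 hmin.2
  · intro p hcp hpM
    have hspec := Nat.find_spec hex
    have hcM : Nat.find hex < M := lt_of_le_of_lt hcp hpM
    have hfc : f (Nat.find hex) = v2 (Nat.find hex) := by
      rcases hspec with h1 | h2
      · omega
      · exact h2
    rcases eq_or_lt_of_le hcp with heq | hlt
    · rw [← heq]; exact hfc
    · exact hmono _ p hlt hpM hfc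

lemma hasNesting_zero (n : ℕ) (σ : Equiv.Perm (Fin n)) : HasNesting n 0 σ := by
  refine ⟨Fin.elim0, Or.inl ⟨?_, ?_, fun i => i.elim0⟩⟩
  · intro i; exact i.elim0
  · intro i; exact i.elim0

lemma hasNesting_le {m k : ℕ} {σ : Equiv.Perm (Fin (2 * m))} (h : HasNesting (2 * m) k σ) :
    k ≤ m := by
  rcases Nat.eq_zero_or_pos k with rfl | hk
  · omega
  obtain ⟨a, h | h⟩ := h <;> obtain ⟨ha, hd, hb⟩ := h
  · have h1 := santi_gap hd (k - 1) ⟨0, hk⟩ ⟨k - 1, by omega⟩ (by simp)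
    have h2 := smono_gap ha (k - 1) ⟨0, hk⟩ ⟨k - 1, by omega⟩ (by simp)
    have h3 := hb ⟨k - 1, by omega⟩ ⟨k - 1, by omega⟩
    have h4 := (σ (a ⟨0, hk⟩)).isLt
    omega
  · have h1 := santi_gap hd (k - 1) ⟨0, hk⟩ ⟨k - 1, by omega⟩ (by simp)
    have h2 := smono_gap ha (k - 1) ⟨0, hk⟩ ⟨k - 1, by omega⟩ (by simp)
    have h3 := hb ⟨0, hk⟩ ⟨0, hk⟩
    have h4 := (a ⟨k - 1, by omega⟩).isLt
    omega

lemma nestNum_eq_iff (m : ℕ) (σ : Equiv.Perm (Fin (2 * m))) :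
    nestNum (2 * m) σ = m ↔ HasNesting (2 * m) m σ := by
  have hne : {k | HasNesting (2 * m) k σ}.Nonempty := ⟨0, hasNesting_zero _ _⟩
  have hbdd : BddAbove {k | HasNesting (2 * m) k σ} := ⟨m, fun k hk => hasNesting_le hk⟩
  constructor
  · intro h
    have hmem := Nat.sSup_mem hne hbdd
    rw [nestNum] at h
    rwa [h] at hmem
  · intro h
    exact le_antisymm (csSup_le hne fun k hk => hasNesting_le hk) (le_csSup hbdd h)

def PL (m : ℕ) (σ : Equiv.Perm (Fin (2 * m))) : Prop :=
  ∀ p : Fin (2 * m), m ≤ (p : ℕ) → (σ p : ℕ) = 2 * m - 1 - (p : ℕ)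

def PU1 (m : ℕ) (σ : Equiv.Perm (Fin (2 * m))) : Prop :=
  ∀ p : Fin (2 * m), (p : ℕ) < m → (σ p : ℕ) = 2 * m - 1 - (p : ℕ)

def PU2 (m : ℕ) (σ : Equiv.Perm (Fin (2 * m))) : Prop :=
  (∀ p : Fin (2 * m), (p : ℕ) = m - 1 → (σ p : ℕ) = m - 1) ∧
  (∀ p : Fin (2 * m), (p : ℕ) < m - 1 → m ≤ (σ p : ℕ)) ∧
  (∀ p q : Fin (2 * m), (p : ℕ) < (q : ℕ) → (q : ℕ) < m - 1 → (σ q : ℕ) < (σ p : ℕ))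

def PU3 (m : ℕ) (σ : Equiv.Perm (Fin (2 * m))) : Prop :=
  (∀ p : Fin (2 * m), (p : ℕ) = m → (σ p : ℕ) = m) ∧
  ∃ j < m, (∀ p : Fin (2 * m), (p : ℕ) < j → (σ p : ℕ) = 2 * m - 1 - (p : ℕ)) ∧
    (∀ p : Fin (2 * m), j < (p : ℕ) → (p : ℕ) < m → (σ p : ℕ) = 2 * m - (p : ℕ))

def PU2' (m k : ℕ) (σ : Equiv.Perm (Fin (2 * m))) : Prop :=
  ∀ p : Fin (2 * m), (p : ℕ) < m →
    (σ p : ℕ) = (if (p : ℕ) = m - 1 then m - 1 else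
      if (p : ℕ) < m - 1 - k then 2 * m - 1 - (p : ℕ) else 2 * m - 2 - (p : ℕ))

def PU3' (m j : ℕ) (σ : Equiv.Perm (Fin (2 * m))) : Prop :=
  ∀ p : Fin (2 * m), (p : ℕ) ≤ m → (p : ℕ) ≠ j →
    (σ p : ℕ) = (if (p : ℕ) < j then 2 * m - 1 - (p : ℕ) else
      if (p : ℕ) = m then m else 2 * m - (p : ℕ))

open scoped Classical in
lemma card_prescribed {N : ℕ} (s : Finset (Fin N)) (f : Fin N → Fin N)
    (hf : Set.InjOn f ↑s) :
    ((univ : Finset (Equiv.Perm (Fin N))).filter (fun σ => ∀ x ∈ s, σ x = f x)).card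
      = (N - s.card).factorial := by
  classical
  set t := s.image f with ht
  have hts : t.card = s.card := Finset.card_image_of_injOn hf
  have key : ∀ (σ : Equiv.Perm (Fin N)), (∀ x ∈ s, σ x = f x) →
      ∀ x : Fin N, x ∉ s → σ x ∉ t := by
    intro σ hσ x hx hmem
    rw [ht, Finset.mem_image] at hmem
    obtain ⟨y, hy, hxy⟩ := hmem
    rw [← hσ y hy] at hxy
    exact hx (σ.injective hxy ▸ hy)
  have hcc : Fintype.card {x // x ∈ sᶜ} = Fintype.card {x // x ∈ tᶜ} := by
    simp [Finset.card_compl, hts]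
  set P : Equiv.Perm (Fin N) → Prop := fun σ => ∀ x ∈ s, σ x = f x with hP
  let F : {σ : Equiv.Perm (Fin N) // P σ} → ({x // x ∈ sᶜ} ≃ {x // x ∈ tᶜ}) := fun σp =>
    Equiv.ofBijective
      (fun x => ⟨σp.1 x.1, by
        simp only [Finset.mem_compl]
        exact key σp.1 σp.2 x.1 (Finset.mem_compl.mp x.2)⟩)
      (by
        refine (Fintype.bijective_iff_injective_and_card _).2 ⟨?_, hcc⟩
        intro x y hxy
        have : x.1 = y.1 := σp.1.injective (congrArg Subtype.val hxy)
        exact Subtype.ext this)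
  let G : ({x // x ∈ sᶜ} ≃ {x // x ∈ tᶜ}) → {σ : Equiv.Perm (Fin N) // P σ} := fun e => by
    refine ⟨Equiv.ofBijective (fun x => if h : x ∈ s then f x
        else (e ⟨x, Finset.mem_compl.mpr h⟩ : Fin N)) ?_, ?_⟩
    · apply Finite.injective_iff_bijective.mp
      intro x y hxy
      by_cases hx : x ∈ s <;> by_cases hy : y ∈ s <;> simp only [hx, hy, dif_pos, dif_neg,
        not_false_iff] at hxy
      · exact hf hx hy hxy
      · exfalso
        have h1 : f x ∈ t := Finset.mem_image_of_mem f hx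
        have h2 := (e ⟨y, Finset.mem_compl.mpr hy⟩).2
        rw [← hxy] at h2
        exact Finset.mem_compl.mp h2 h1
      · exfalso
        have h1 : f y ∈ t := Finset.mem_image_of_mem f hy
        have h2 := (e ⟨x, Finset.mem_compl.mpr hx⟩).2
        rw [hxy] at h2
        exact Finset.mem_compl.mp h2 h1
      · have := e.injective (Subtype.ext hxy)
        simpa using congrArg Subtype.val this
    · intro x hx
      simp [Equiv.ofBijective, hx]
  have hGF : ∀ σp, G (F σp) = σp := by
    intro σp
    apply Subtype.ext
    apply Equiv.ext
    intro x
    simp only [G, Equiv.ofBijective]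
    by_cases hx : x ∈ s
    · simp [hx, (σp.2 x hx).symm]
    · simp [hx, F, Equiv.ofBijective]
  have hFG : ∀ e, F (G e) = e := by
    intro e
    apply Equiv.ext
    intro x
    apply Subtype.ext
    have hx := Finset.mem_compl.mp x.2
    simp [F, G, Equiv.ofBijective, hx]
  have hcard : ((univ : Finset (Equiv.Perm (Fin N))).filter P).card
      = Fintype.card ({x // x ∈ sᶜ} ≃ {x // x ∈ tᶜ}) := by
    rw [← Fintype.card_subtype]
    exact Fintype.card_congr ⟨F, G, hGF, hFG⟩
  rw [hcard, Fintype.card_equiv (Fintype.equivOfCardEq hcc)]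
  congr 1
  simp [Finset.card_compl]

open scoped Classical in
lemma count_cond {N : ℕ} (cond : ℕ → Prop) [DecidablePred cond] (v : ℕ → ℕ)
    (hv : ∀ p, p < N → cond p → v p < N)
    (hinj : ∀ p q, p < N → q < N → cond p → cond q → v p = v q → p = q) (c : ℕ)
    (hc : ((univ : Finset (Fin N)).filter (fun p : Fin N => cond (p : ℕ))).card = c) :
    ((univ : Finset (Equiv.Perm (Fin N))).filter
        (fun σ => ∀ p : Fin N, cond (p : ℕ) → (σ p : ℕ) = v (p : ℕ))).card
      = (N - c).factorial := by
  classical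
  subst hc
  set s := (univ : Finset (Fin N)).filter (fun p : Fin N => cond (p : ℕ)) with hs
  let f : Fin N → Fin N := fun p => if h : cond (p : ℕ) then ⟨v p, hv p p.isLt h⟩ else p
  have hfinj : Set.InjOn f ↑s := by
    intro x hx y hy hxy
    rw [hs] at hx hy
    simp only [Finset.coe_filter, Set.mem_setOf_eq] at hx hy
    simp only [f, dif_pos hx.2, dif_pos hy.2] at hxy
    have := congrArg Fin.val hxy
    simp at this
    exact Fin.ext (hinj _ _ x.isLt y.isLt hx.2 hy.2 this)
  have hiff : ∀ σ : Equiv.Perm (Fin N),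
      ((∀ x ∈ s, σ x = f x) ↔ (∀ p : Fin N, cond (p : ℕ) → (σ p : ℕ) = v (p : ℕ))) := by
    intro σ
    constructor
    · intro h p hp
      have := h p (by simp [hs, hp])
      rw [this]
      simp [f, dif_pos hp]
    · intro h x hx
      have hc : cond (x : ℕ) := by
        rw [hs, Finset.mem_filter] at hx
        exact hx.2
      apply Fin.ext
      simp [f, dif_pos hc]
      exact h x hc
  rw [show ((univ : Finset (Equiv.Perm (Fin N))).filter
        (fun σ => ∀ p : Fin N, cond (p : ℕ) → (σ p : ℕ) = v (p : ℕ)))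
      = ((univ : Finset (Equiv.Perm (Fin N))).filter (fun σ => ∀ x ∈ s, σ x = f x)) from
    Finset.filter_congr (fun σ _ => by rw [hiff σ])]
  exact card_prescribed s f hfinj

open scoped Classical in
lemma card_filter_lt (N t : ℕ) (h : t ≤ N) :
    ((univ : Finset (Fin N)).filter (fun p : Fin N => (p : ℕ) < t)).card = t := by
  classical
  have : ((univ : Finset (Fin N)).filter (fun p : Fin N => (p : ℕ) < t)).card
      = ((univ : Finset (Fin t))).card := by
    exact Finset.card_bij'
      (fun p hp => (⟨(p : ℕ), (Finset.mem_filter.mp hp).2⟩ : Fin t))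
      (fun q _ => (⟨(q : ℕ), by omega⟩ : Fin N))
      (fun a ha => Finset.mem_univ _)
      (fun a ha => by simp)
      (fun a ha => by apply Fin.ext; simp)
      (fun a ha => by apply Fin.ext; simp)
  simpa using this

open scoped Classical in
lemma card_filter_le (N t : ℕ) (h : t < N) :
    ((univ : Finset (Fin N)).filter (fun p : Fin N => (p : ℕ) ≤ t)).card = t + 1 := by
  classical
  rw [show ((univ : Finset (Fin N)).filter (fun p : Fin N => (p : ℕ) ≤ t))
      = ((univ : Finset (Fin N)).filter (fun p : Fin N => (p : ℕ) < t + 1)) from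
    Finset.filter_congr (fun p _ => by omega)]
  exact card_filter_lt N (t + 1) (by omega)

open scoped Classical in
lemma card_filter_ge (m : ℕ) :
    ((univ : Finset (Fin (2 * m))).filter (fun p : Fin (2 * m) => m ≤ (p : ℕ))).card = m := by
  classical
  have h1 := Finset.card_filter_add_card_filter_not
    (s := (univ : Finset (Fin (2 * m)))) (p := fun p : Fin (2 * m) => (p : ℕ) < m)
  rw [show ((univ : Finset (Fin (2 * m))).filter (fun p : Fin (2 * m) => ¬ (p : ℕ) < m))
      = ((univ : Finset (Fin (2 * m))).filter (fun p : Fin (2 * m) => m ≤ (p : ℕ))) from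
    Finset.filter_congr (fun p _ => by simp)] at h1
  have h2 := card_filter_lt (2 * m) m (by omega)
  simp only [Finset.card_univ, Fintype.card_fin] at h1
  omega

lemma PU2_iff (m : ℕ) (hm : 1 ≤ m) (σ : Equiv.Perm (Fin (2 * m))) :
    PU2 m σ ↔ ∃ k < m, PU2' m k σ := by
  constructor
  · rintro ⟨h1, h2, h3⟩
    set f : ℕ → ℕ := fun p => if h : p < 2 * m then ((σ ⟨p, h⟩ : Fin (2 * m)) : ℕ) else 0 with hf
    have hfv : ∀ (p : Fin (2 * m)), f (p : ℕ) = (σ p : ℕ) := by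
      intro p
      simp only [hf, dif_pos p.isLt]
    have hdec : ∀ p q, p < q → q < m - 1 → f q < f p := by
      intro p q hpq hq
      have := h3 ⟨p, by omega⟩ ⟨q, by omega⟩ (show p < q from hpq) (show q < m - 1 from hq)
      simp only [hf, dif_pos (show p < 2*m by omega), dif_pos (show q < 2*m by omega)]
      exact this
    have hgap : ∀ p q, p ≤ q → q < m - 1 → f q + (q - p) ≤ f p :=
      fun p q hpq hq => chain_gap f (m - 1) hdec (q - p) p q (by omega) hq
    have hub : ∀ p, p < m - 1 → f p ≤ 2 * m - 1 - p := by
      intro p hp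
      have hg := hgap 0 p (by omega) hp
      have h0 : f 0 < 2 * m := by
        simp only [hf, dif_pos (show 0 < 2*m by omega)]
        exact (σ ⟨0, by omega⟩).isLt
      omega
    have hlb : ∀ p, p < m - 1 → 2 * m - 2 - p ≤ f p := by
      intro p hp
      have hg := hgap p (m - 2) (by omega) (by omega)
      have hm2 : m ≤ f (m - 2) := by
        simp only [hf, dif_pos (show m - 2 < 2*m by omega)]
        exact h2 ⟨m - 2, by omega⟩ (show m - 2 < m - 1 by omega)
      omega
    obtain ⟨c, hcM, hv1, hv2⟩ := threshold (m - 1) f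
      (fun p => 2 * m - 1 - p) (fun p => 2 * m - 2 - p)
      (fun p hp => by
        have := hub p hp; have := hlb p hp
        show f p = 2 * m - 1 - p ∨ f p = 2 * m - 2 - p
        omega)
      (fun p q hpq hq hfp => by
        have := hgap p q (le_of_lt hpq) hq
        have := hlb q hq
        have hfp' : f p = 2 * m - 2 - p := hfp
        show f q = 2 * m - 2 - q
        omega)
    refine ⟨m - 1 - c, by omega, ?_⟩
    intro p hp
    by_cases hpe : (p : ℕ) = m - 1
    · rw [if_pos hpe]; exact h1 p hpe
    · rw [if_neg hpe]
      have hplt : (p : ℕ) < m - 1 := by omega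
      rw [show m - 1 - (m - 1 - c) = c from by omega]
      by_cases hpc : (p : ℕ) < c
      · rw [if_pos hpc, ← hfv p]; exact hv1 _ hpc
      · rw [if_neg hpc, ← hfv p]; exact hv2 _ (by omega) hplt
  · rintro ⟨k, hk, h⟩
    refine ⟨?_, ?_, ?_⟩
    · intro p hp
      have := h p (by omega)
      rw [if_pos hp] at this
      exact this
    · intro p hp
      have := h p (by omega)
      rw [if_neg (by omega)] at this
      split_ifs at this <;> omega
    · intro p q hpq hq
      have e1 := h p (by omega)
      have e2 := h q (by omega)
      rw [if_neg (by omega)] at e1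
      rw [if_neg (by omega)] at e2
      split_ifs at e1 e2 <;> omega

lemma PU3_iff (m : ℕ) (hm : 1 ≤ m) (σ : Equiv.Perm (Fin (2 * m))) :
    PU3 m σ ↔ ∃ j < m, PU3' m j σ := by
  constructor
  · rintro ⟨h0, j, hj, h1, h2⟩
    refine ⟨j, hj, ?_⟩
    intro p hpm hpj
    by_cases hc1 : (p : ℕ) < j
    · rw [if_pos hc1]; exact h1 p hc1
    · rw [if_neg hc1]
      by_cases hc2 : (p : ℕ) = m
      · rw [if_pos hc2]; exact h0 p hc2
      · rw [if_neg hc2]; exact h2 p (by omega) (by omega)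
  · rintro ⟨j, hj, h⟩
    refine ⟨?_, j, hj, ?_, ?_⟩
    · intro p hp
      have := h p (by omega) (by omega)
      rw [if_neg (by omega), if_pos hp] at this
      exact this
    · intro p hp
      have := h p (by omega) (by omega)
      rw [if_pos hp] at this
      exact this
    · intro p hp1 hp2
      have := h p (by omega) (by omega)
      rw [if_neg (by omega), if_neg (by omega)] at this
      exact this

lemma PU2'_disj (m k k' : ℕ) (hkk' : k < k') (hk' : k' < m)
    (σ : Equiv.Perm (Fin (2 * m))) (h : PU2' m k σ) (h' : PU2' m k' σ) : False := by
  have hp : m - 1 - k' < 2 * m := by omega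
  have e1 := h ⟨m - 1 - k', hp⟩ (show m - 1 - k' < m by omega)
  have e2 := h' ⟨m - 1 - k', hp⟩ (show m - 1 - k' < m by omega)
  simp only [Fin.val_mk] at e1 e2
  rw [if_neg (show ¬ (m - 1 - k' = m - 1) by omega),
    if_pos (show m - 1 - k' < m - 1 - k by omega)] at e1
  rw [if_neg (show ¬ (m - 1 - k' = m - 1) by omega),
    if_neg (show ¬ (m - 1 - k' < m - 1 - k') by omega)] at e2
  omega

lemma PU3'_disj (m j j' : ℕ) (hjj' : j < j') (hj' : j' < m)
    (σ : Equiv.Perm (Fin (2 * m))) (h : PU3' m j σ) (h' : PU3' m j' σ) : False := by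
  have hp1 : j < 2 * m := by omega
  have hp2 : j + 1 < 2 * m := by omega
  have e1 := h' ⟨j, hp1⟩ (show j ≤ m by omega) (show j ≠ j' by omega)
  have e2 := h ⟨j + 1, hp2⟩ (show j + 1 ≤ m by omega) (show j + 1 ≠ j by omega)
  simp only [Fin.val_mk] at e1 e2
  rw [if_pos (show j < j' from hjj')] at e1
  rw [if_neg (show ¬ (j + 1 < j) by omega)] at e2
  have hvals : (σ ⟨j, hp1⟩ : ℕ) = (σ ⟨j + 1, hp2⟩ : ℕ) := by
    split_ifs at e2 <;> omega
  have := σ.injective (Fin.ext hvals : σ ⟨j, hp1⟩ = σ ⟨j + 1, hp2⟩)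
  have := congrArg Fin.val this
  simp only [Fin.val_mk] at this
  omega

lemma card_filter_iff {α : Type*} [Fintype α] {p q : α → Prop}
    {i1 : DecidablePred p} {i2 : DecidablePred q} (h : ∀ a, p a ↔ q a) :
    (@Finset.filter α p i1 Finset.univ).card = (@Finset.filter α q i2 Finset.univ).card := by
  congr 1
  ext a
  simp only [Finset.mem_filter, Finset.mem_univ, true_and]
  exact h a

open scoped Classical in
lemma card_SL (m : ℕ) (hm : 1 ≤ m) :
    ((univ : Finset (Equiv.Perm (Fin (2 * m)))).filter (fun σ => PL m σ)).card
      = m.factorial := by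
  refine (card_filter_iff (fun σ => Iff.rfl)).trans
    ((count_cond (N := 2 * m) (fun x => m ≤ x) (fun x => 2 * m - 1 - x)
      (fun p hp hc => by
        have hc' : ((m ≤ p) : Prop) := hc
        show 2 * m - 1 - p < 2 * m
        omega)
      (fun p q hp hq hcp hcq hv => by
        have hcp' : ((m ≤ p) : Prop) := hcp
        have hcq' : ((m ≤ q) : Prop) := hcq
        have hv' : 2 * m - 1 - p = 2 * m - 1 - q := hv
        omega) m
      (card_filter_ge m)).trans ?_)
  rw [show 2 * m - m = m from by omega]

open scoped Classical in
lemma card_SU1 (m : ℕ) (hm : 1 ≤ m) :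
    ((univ : Finset (Equiv.Perm (Fin (2 * m)))).filter (fun σ => PU1 m σ)).card
      = m.factorial := by
  refine (card_filter_iff (fun σ => Iff.rfl)).trans
    ((count_cond (N := 2 * m) (fun x => x < m) (fun x => 2 * m - 1 - x)
      (fun p hp hc => by
        have hc' : ((p < m) : Prop) := hc
        show 2 * m - 1 - p < 2 * m
        omega)
      (fun p q hp hq hcp hcq hv => by
        have hcp' : ((p < m) : Prop) := hcp
        have hcq' : ((q < m) : Prop) := hcq
        have hv' : 2 * m - 1 - p = 2 * m - 1 - q := hv
        omega) m
      (card_filter_lt (2 * m) m (by omega))).trans ?_)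
  rw [show 2 * m - m = m from by omega]

open scoped Classical in
lemma card_SLU1 (m : ℕ) (hm : 1 ≤ m) :
    ((univ : Finset (Equiv.Perm (Fin (2 * m)))).filter (fun σ => PL m σ ∧ PU1 m σ)).card
      = 1 := by
  refine (card_filter_iff (fun σ => ?_)).trans
    ((count_cond (N := 2 * m) (fun _ => True) (fun x => 2 * m - 1 - x)
      (fun p hp hc => by show 2 * m - 1 - p < 2 * m; omega)
      (fun p q hp hq hcp hcq hv => by
        have hv' : 2 * m - 1 - p = 2 * m - 1 - q := hv
        omega) (2 * m)
      (by rw [Finset.filter_true, Finset.card_univ, Fintype.card_fin])).trans ?_)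
  · constructor
    · rintro ⟨h1, h2⟩ p _
      by_cases hc : m ≤ (p : ℕ)
      · exact h1 p hc
      · exact h2 p (by omega)
    · intro h
      exact ⟨fun p hp => h p trivial, fun p hp => h p trivial⟩
  · rw [Nat.sub_self, Nat.factorial_zero]

open scoped Classical in
lemma card_PU2' (m k : ℕ) (hm : 1 ≤ m) (hk : k < m) :
    ((univ : Finset (Equiv.Perm (Fin (2 * m)))).filter (fun σ => PU2' m k σ)).card
      = m.factorial := by
  refine (card_filter_iff (fun σ => Iff.rfl)).trans
    ((count_cond (N := 2 * m) (fun x => x < m)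
      (fun x => if x = m - 1 then m - 1 else
        if x < m - 1 - k then 2 * m - 1 - x else 2 * m - 2 - x)
      (fun p hp hc => by
        show (if p = m - 1 then m - 1 else
          if p < m - 1 - k then 2 * m - 1 - p else 2 * m - 2 - p) < 2 * m
        split_ifs <;> omega)
      (fun p q hp hq hcp hcq hv => by
        have hv' : (if p = m - 1 then m - 1 else
            if p < m - 1 - k then 2 * m - 1 - p else 2 * m - 2 - p)
          = (if q = m - 1 then m - 1 else
            if q < m - 1 - k then 2 * m - 1 - q else 2 * m - 2 - q) := hv
        have hcp' : p < m := hcp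
        have hcq' : q < m := hcq
        split_ifs at hv' <;> omega) m
      (card_filter_lt (2 * m) m (by omega))).trans ?_)
  rw [show 2 * m - m = m from by omega]

open scoped Classical in
lemma card_SU2 (m : ℕ) (hm : 1 ≤ m) :
    ((univ : Finset (Equiv.Perm (Fin (2 * m)))).filter (fun σ => PU2 m σ)).card
      = m * m.factorial := by
  classical
  rw [show ((univ : Finset (Equiv.Perm (Fin (2 * m)))).filter (fun σ => PU2 m σ))
      = (Finset.range m).biUnion
          (fun k => (univ : Finset (Equiv.Perm (Fin (2 * m)))).filter
            (fun σ => PU2' m k σ)) from ?_]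
  · rw [Finset.card_biUnion ?_]
    · rw [Finset.sum_congr rfl (fun k hk => card_PU2' m k hm (Finset.mem_range.mp hk)),
        Finset.sum_const, Finset.card_range, smul_eq_mul]
    · intro k hk k' hk' hne
      rw [Function.onFun, Finset.disjoint_left]
      intro σ hσ hσ'
      simp only [Finset.mem_filter] at hσ hσ'
      rcases Nat.lt_or_ge k k' with hlt | hge
      · exact PU2'_disj m k k' hlt (Finset.mem_range.mp hk') σ hσ.2 hσ'.2
      · exact PU2'_disj m k' k (by omega) (Finset.mem_range.mp hk) σ hσ'.2 hσ.2
  · ext σ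
    simp only [Finset.mem_filter, Finset.mem_biUnion, Finset.mem_range, Finset.mem_univ,
      true_and]
    rw [PU2_iff m hm σ]

open scoped Classical in
lemma card_cond3 (m j : ℕ) (hm : 1 ≤ m) (hj : j < m) :
    ((univ : Finset (Fin (2 * m))).filter
      (fun p : Fin (2 * m) => (p : ℕ) ≤ m ∧ (p : ℕ) ≠ j)).card = m := by
  classical
  have heq : ((univ : Finset (Fin (2 * m))).filter
        (fun p : Fin (2 * m) => (p : ℕ) ≤ m ∧ (p : ℕ) ≠ j))
      = ((univ : Finset (Fin (2 * m))).filter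
          (fun p : Fin (2 * m) => (p : ℕ) ≤ m)).erase ⟨j, by omega⟩ := by
    ext p
    simp only [Finset.mem_filter, Finset.mem_erase, Finset.mem_univ, true_and]
    constructor
    · rintro ⟨h1, h2⟩
      exact ⟨fun he => h2 (by rw [he]), h1⟩
    · rintro ⟨h1, h2⟩
      exact ⟨h2, fun he => h1 (Fin.ext (by simp [he]))⟩
  rw [heq, Finset.card_erase_of_mem (by
    simp only [Finset.mem_filter, Finset.mem_univ, Fin.val_mk, true_and]
    omega), card_filter_le (2 * m) m (by omega)]
  omega

open scoped Classical in
lemma card_PU3' (m j : ℕ) (hm : 1 ≤ m) (hj : j < m) :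
    ((univ : Finset (Equiv.Perm (Fin (2 * m)))).filter (fun σ => PU3' m j σ)).card
      = m.factorial := by
  refine (card_filter_iff (fun σ => ?_)).trans
    ((count_cond (N := 2 * m) (fun x => x ≤ m ∧ x ≠ j)
      (fun x => if x < j then 2 * m - 1 - x else if x = m then m else 2 * m - x)
      (fun p hp hc => by
        show (if p < j then 2 * m - 1 - p else if p = m then m else 2 * m - p) < 2 * m
        split_ifs <;> omega)
      (fun p q hp hq hcp hcq hv => by
        obtain ⟨hcp1, hcp2⟩ := hcp
        obtain ⟨hcq1, hcq2⟩ := hcq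
        have hv' : (if p < j then 2 * m - 1 - p else if p = m then m else 2 * m - p)
          = (if q < j then 2 * m - 1 - q else if q = m then m else 2 * m - q) := hv
        split_ifs at hv' <;> omega) m
      (card_cond3 m j hm hj)).trans ?_)
  · constructor
    · intro hσ p hp
      exact hσ p hp.1 hp.2
    · intro hσ p hp1 hp2
      exact hσ p ⟨hp1, hp2⟩
  · rw [show 2 * m - m = m from by omega]

open scoped Classical in
lemma card_SU3 (m : ℕ) (hm : 1 ≤ m) :
    ((univ : Finset (Equiv.Perm (Fin (2 * m)))).filter (fun σ => PU3 m σ)).card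
      = m * m.factorial := by
  classical
  rw [show ((univ : Finset (Equiv.Perm (Fin (2 * m)))).filter (fun σ => PU3 m σ))
      = (Finset.range m).biUnion
          (fun j => (univ : Finset (Equiv.Perm (Fin (2 * m)))).filter
            (fun σ => PU3' m j σ)) from ?_]
  · rw [Finset.card_biUnion ?_]
    · rw [Finset.sum_congr rfl (fun j hj => card_PU3' m j hm (Finset.mem_range.mp hj)),
        Finset.sum_const, Finset.card_range, smul_eq_mul]
    · intro j hj j' hj' hne
      rw [Function.onFun, Finset.disjoint_left]
      intro σ hσ hσ'
      simp only [Finset.mem_filter] at hσ hσ'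
      rcases Nat.lt_or_ge j j' with hlt | hge
      · exact PU3'_disj m j j' hlt (Finset.mem_range.mp hj') σ hσ.2 hσ'.2
      · exact PU3'_disj m j' j (by omega) (Finset.mem_range.mp hj) σ hσ'.2 hσ.2
  · ext σ
    simp only [Finset.mem_filter, Finset.mem_biUnion, Finset.mem_range, Finset.mem_univ,
      true_and]
    rw [PU3_iff m hm σ]

open scoped Classical in
lemma card_SU23 (m : ℕ) (hm : 1 ≤ m) :
    ((univ : Finset (Equiv.Perm (Fin (2 * m)))).filter (fun σ => PU2 m σ ∧ PU3 m σ)).card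
      = (m - 1).factorial := by
  refine (card_filter_iff (fun σ => ?_)).trans
    ((count_cond (N := 2 * m) (fun x => x ≤ m)
      (fun x => if x < m - 1 then 2 * m - 1 - x else if x = m - 1 then m - 1 else m)
      (fun p hp hc => by
        show (if p < m - 1 then 2 * m - 1 - p else if p = m - 1 then m - 1 else m) < 2 * m
        split_ifs <;> omega)
      (fun p q hp hq hcp hcq hv => by
        have hcp' : p ≤ m := hcp
        have hcq' : q ≤ m := hcq
        have hv' : (if p < m - 1 then 2 * m - 1 - p else if p = m - 1 then m - 1 else m)
          = (if q < m - 1 then 2 * m - 1 - q else if q = m - 1 then m - 1 else m) := hv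
        split_ifs at hv' <;> omega) (m + 1)
      (card_filter_le (2 * m) m (by omega))).trans ?_)
  · constructor
    · rintro ⟨⟨h1, h2, h3⟩, h0, j, hj, g1, g2⟩
      have hjm : j = m - 1 := by
        by_contra hne
        have hjlt : j < m - 1 := by omega
        have e1 := g2 ⟨m - 1, by omega⟩ (show j < m - 1 from hjlt) (show m - 1 < m by omega)
        have e2 := h1 ⟨m - 1, by omega⟩ (show (m : ℕ) - 1 = m - 1 from rfl)
        simp only [Fin.val_mk] at e1 e2
        omega
      subst hjm
      intro p hp
      by_cases hc1 : (p : ℕ) < m - 1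
      · rw [if_pos hc1]; exact g1 p hc1
      · rw [if_neg hc1]
        by_cases hc2 : (p : ℕ) = m - 1
        · rw [if_pos hc2]; exact h1 p hc2
        · rw [if_neg hc2]; exact h0 p (by omega)
    · intro h
      refine ⟨⟨?_, ?_, ?_⟩, ?_, m - 1, by omega, ?_, ?_⟩
      · intro p hp
        have e := h p (by omega)
        rw [if_neg (by omega), if_pos hp] at e
        exact e
      · intro p hp
        have e := h p (by omega)
        rw [if_pos hp] at e
        omega
      · intro p q hpq hq
        have e1 := h p (by omega)
        have e2 := h q (by omega)
        rw [if_pos (by omega)] at e1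
        rw [if_pos hq] at e2
        omega
      · intro p hp
        have e := h p (by omega)
        rw [if_neg (by omega), if_neg (by omega)] at e
        exact e
      · intro p hp
        have e := h p (by omega)
        rw [if_pos hp] at e
        exact e
      · intro p hp1 hp2
        omega
  · rw [show 2 * m - (m + 1) = m - 1 from by omega]

lemma PL_PU2_empty (m : ℕ) (hm : 1 ≤ m) (σ : Equiv.Perm (Fin (2 * m)))
    (h1 : PL m σ) (h2 : PU2 m σ) : False := by
  have e1 := h1 ⟨m, by omega⟩ (show m ≤ m from le_rfl)
  have e2 := h2.1 ⟨m - 1, by omega⟩ (show (m : ℕ) - 1 = m - 1 from rfl)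
  simp only [Fin.val_mk] at e1 e2
  have heq : σ ⟨m, by omega⟩ = σ ⟨m - 1, by omega⟩ := Fin.ext (by omega)
  have := congrArg Fin.val (σ.injective heq)
  simp only [Fin.val_mk] at this
  omega

lemma PL_PU3_empty (m : ℕ) (hm : 1 ≤ m) (σ : Equiv.Perm (Fin (2 * m)))
    (h1 : PL m σ) (h2 : PU3 m σ) : False := by
  have e1 := h1 ⟨m, by omega⟩ (show m ≤ m from le_rfl)
  have e2 := h2.1 ⟨m, by omega⟩ (show (m : ℕ) = m from rfl)
  simp only [Fin.val_mk] at e1 e2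
  omega

lemma PU1_PU2_empty (m : ℕ) (hm : 1 ≤ m) (σ : Equiv.Perm (Fin (2 * m)))
    (h1 : PU1 m σ) (h2 : PU2 m σ) : False := by
  have e1 := h1 ⟨m - 1, by omega⟩ (show m - 1 < m by omega)
  have e2 := h2.1 ⟨m - 1, by omega⟩ (show (m : ℕ) - 1 = m - 1 from rfl)
  simp only [Fin.val_mk] at e1 e2
  omega

lemma PU1_PU3_empty (m : ℕ) (hm : 1 ≤ m) (σ : Equiv.Perm (Fin (2 * m)))
    (h1 : PU1 m σ) (h2 : PU3 m σ) : False := by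
  have e1 := h1 ⟨m - 1, by omega⟩ (show m - 1 < m by omega)
  have e2 := h2.1 ⟨m, by omega⟩ (show (m : ℕ) = m from rfl)
  simp only [Fin.val_mk] at e1 e2
  have heq : σ ⟨m - 1, by omega⟩ = σ ⟨m, by omega⟩ := Fin.ext (by omega)
  have := congrArg Fin.val (σ.injective heq)
  simp only [Fin.val_mk] at this
  omega

lemma lower_char (m : ℕ) (hm : 1 ≤ m) (σ : Equiv.Perm (Fin (2 * m)))
    (a : Fin m → Fin (2 * m)) (h : IsLowerNesting (2 * m) m σ a) : PL m σ := by
  obtain ⟨ha, hd, hb⟩ := h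
  have gapA : ∀ i j : Fin m, (i : ℕ) ≤ (j : ℕ) →
      (a i : ℕ) + ((j : ℕ) - (i : ℕ)) ≤ (a j : ℕ) :=
    fun i j hij => smono_gap ha _ i j (by omega)
  have gapB : ∀ i j : Fin m, (i : ℕ) ≤ (j : ℕ) →
      ((σ (a j)) : ℕ) + ((j : ℕ) - (i : ℕ)) ≤ ((σ (a i)) : ℕ) :=
    fun i j hij => santi_gap hd _ i j (by omega)
  have key : ∀ i : Fin m, (a i : ℕ) = m + (i : ℕ) ∧ (σ (a i) : ℕ) = m - 1 - (i : ℕ) := by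
    intro i
    have h8 := i.isLt
    have h1 := gapA ⟨0, by omega⟩ i (by simp)
    have h2 := gapA i ⟨m - 1, by omega⟩ (by simp; omega)
    have h3 := gapB ⟨0, by omega⟩ i (by simp)
    have h4 := gapB i ⟨m - 1, by omega⟩ (by simp; omega)
    have h5 := hb ⟨0, by omega⟩ ⟨0, by omega⟩
    have h6 := hb i ⟨0, by omega⟩
    have h7 := (a ⟨m - 1, by omega⟩).isLt
    simp only [Fin.val_mk] at h1 h2 h3 h4
    constructor <;> omega
  intro p hp
  have hplt := p.isLt
  obtain ⟨h1, h2⟩ := key ⟨(p : ℕ) - m, by omega⟩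
  simp only [Fin.val_mk] at h1 h2
  have hip : a ⟨(p : ℕ) - m, by omega⟩ = p := Fin.ext (by rw [h1]; omega)
  rw [hip] at h2
  omega

lemma upper_char (m : ℕ) (hm : 1 ≤ m) (σ : Equiv.Perm (Fin (2 * m)))
    (a : Fin m → Fin (2 * m)) (h : IsUpperNesting (2 * m) m σ a) :
    PU1 m σ ∨ PU2 m σ ∨ PU3 m σ := by
  obtain ⟨ha, hd, hb⟩ := h
  have gapA : ∀ i j : Fin m, (i : ℕ) ≤ (j : ℕ) →
      (a i : ℕ) + ((j : ℕ) - (i : ℕ)) ≤ (a j : ℕ) :=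
    fun i j hij => smono_gap ha _ i j (by omega)
  have gapB : ∀ i j : Fin m, (i : ℕ) ≤ (j : ℕ) →
      ((σ (a j)) : ℕ) + ((j : ℕ) - (i : ℕ)) ≤ ((σ (a i)) : ℕ) :=
    fun i j hij => santi_gap hd _ i j (by omega)
  have hAi : ∀ i : Fin m, (i : ℕ) ≤ (a i : ℕ) := by
    intro i
    have := gapA ⟨0, by omega⟩ i (by simp)
    simp only [Fin.val_mk] at this
    omega
  have hAub : ∀ i : Fin m, (a i : ℕ) + (m - 1 - (i : ℕ)) ≤ (a ⟨m - 1, by omega⟩ : ℕ) := by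
    intro i
    have h8 := i.isLt
    have := gapA i ⟨m - 1, by omega⟩ (by simp; omega)
    simp only [Fin.val_mk] at this
    omega
  have hw : (a ⟨m - 1, by omega⟩ : ℕ) ≤ (σ (a ⟨m - 1, by omega⟩) : ℕ) :=
    hb ⟨m - 1, by omega⟩ ⟨m - 1, by omega⟩
  have hBw : (σ (a ⟨m - 1, by omega⟩) : ℕ) = m - 1 ∨ (σ (a ⟨m - 1, by omega⟩) : ℕ) = m := by
    have h1 := gapB ⟨0, by omega⟩ ⟨m - 1, by omega⟩ (by simp)
    have h3 := hAi ⟨m - 1, by omega⟩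
    have h4 := (σ (a ⟨0, by omega⟩)).isLt
    simp only [Fin.val_mk] at h1 h3
    omega
  rcases hBw with hBw | hBw
  · -- σ(a_last) = m-1 : PU2
    have hAw : (a ⟨m - 1, by omega⟩ : ℕ) = m - 1 := by
      have h3 := hAi ⟨m - 1, by omega⟩
      simp only [Fin.val_mk] at h3
      omega
    have haval : ∀ i : Fin m, (a i : ℕ) = (i : ℕ) := by
      intro i
      have h1 := hAub i
      have h2 := hAi i
      have h8 := i.isLt
      omega
    refine Or.inr (Or.inl ⟨?_, ?_, ?_⟩)
    · intro p hp
      have hpa : p = a ⟨m - 1, by omega⟩ := Fin.ext (by rw [hAw]; omega)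
      rw [hpa]
      exact hBw
    · intro p hp
      have hplt := p.isLt
      have hpa : p = a ⟨(p : ℕ), by omega⟩ := Fin.ext (by rw [haval])
      have hg := gapB ⟨(p : ℕ), by omega⟩ ⟨m - 1, by omega⟩ (by simp; omega)
      simp only [Fin.val_mk] at hg
      have e := congrArg (fun x => ((σ x) : ℕ)) hpa
      omega
    · intro p q hpq hq
      have hpa : p = a ⟨(p : ℕ), by omega⟩ := Fin.ext (by rw [haval])
      have hqa : q = a ⟨(q : ℕ), by omega⟩ := Fin.ext (by rw [haval])
      have hlt := hd (show (⟨(p : ℕ), by omega⟩ : Fin m) < ⟨(q : ℕ), by omega⟩ from by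
        rw [Fin.lt_def]; simp only [Fin.val_mk]; omega)
      rw [Fin.lt_def] at hlt
      have hlt' : ((σ (a ⟨(q : ℕ), by omega⟩)) : ℕ) < ((σ (a ⟨(p : ℕ), by omega⟩)) : ℕ) := hlt
      have e1 := congrArg (fun x => ((σ x) : ℕ)) hpa
      have e2 := congrArg (fun x => ((σ x) : ℕ)) hqa
      omega
  · -- σ(a_last) = m
    have hBi : ∀ i : Fin m, (σ (a i) : ℕ) = 2 * m - 1 - (i : ℕ) := by
      intro i
      have h8 := i.isLt
      have h1 := gapB i ⟨m - 1, by omega⟩ (by simp; omega)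
      have h2 := gapB ⟨0, by omega⟩ i (by simp)
      have h4 := (σ (a ⟨0, by omega⟩)).isLt
      simp only [Fin.val_mk] at h1 h2
      omega
    have hAwle : (a ⟨m - 1, by omega⟩ : ℕ) ≤ m := by omega
    have hAwge : m - 1 ≤ (a ⟨m - 1, by omega⟩ : ℕ) := by
      have h3 := hAi ⟨m - 1, by omega⟩
      simp only [Fin.val_mk] at h3
      omega
    by_cases hAw : (a ⟨m - 1, by omega⟩ : ℕ) = m - 1
    · -- PU1
      have haval : ∀ i : Fin m, (a i : ℕ) = (i : ℕ) := by
        intro i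
        have h1 := hAub i
        have h2 := hAi i
        have h8 := i.isLt
        omega
      refine Or.inl ?_
      intro p hp
      have hpa : p = a ⟨(p : ℕ), by omega⟩ := Fin.ext (by rw [haval])
      have hB := hBi ⟨(p : ℕ), by omega⟩
      simp only [Fin.val_mk] at hB
      have e := congrArg (fun x => ((σ x) : ℕ)) hpa
      omega
    · -- a_last = m : PU3
      have hAwm : (a ⟨m - 1, by omega⟩ : ℕ) = m := by omega
      refine Or.inr (Or.inr ⟨?_, ?_⟩)
      · intro p hp
        have hpa : p = a ⟨m - 1, by omega⟩ := Fin.ext (by rw [hAwm]; omega)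
        have hB := hBi ⟨m - 1, by omega⟩
        simp only [Fin.val_mk] at hB
        have e := congrArg (fun x => ((σ x) : ℕ)) hpa
        omega
      · -- find the threshold j
        obtain ⟨c, hcM, hv1, hv2⟩ := threshold (m - 1)
          (fun q => if hq : q < m then (a ⟨q, hq⟩ : ℕ) else 0)
          (fun q => q) (fun q => q + 1)
          (fun q hq => by
            show (if h : q < m then (a ⟨q, h⟩ : ℕ) else 0) = q ∨
              (if h : q < m then (a ⟨q, h⟩ : ℕ) else 0) = q + 1
            rw [dif_pos (show q < m by omega)]
            have h1 := hAi ⟨q, by omega⟩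
            have h2 := hAub ⟨q, by omega⟩
            simp only [Fin.val_mk] at h1 h2
            omega)
          (fun p q hpq hq hfp => by
            have hfp' : (if h : p < m then (a ⟨p, h⟩ : ℕ) else 0) = p + 1 := hfp
            show (if h : q < m then (a ⟨q, h⟩ : ℕ) else 0) = q + 1
            rw [dif_pos (show p < m by omega)] at hfp'
            rw [dif_pos (show q < m by omega)]
            have h1 := gapA ⟨p, by omega⟩ ⟨q, by omega⟩ (by simp only [Fin.val_mk]; omega)
            have h2 := hAub ⟨q, by omega⟩
            simp only [Fin.val_mk] at h1 h2 hfp'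
            omega)
        refine ⟨c, by omega, ?_, ?_⟩
        · intro p hp
          have hplt := p.isLt
          have hval : (if h : (p : ℕ) < m then (a ⟨(p : ℕ), h⟩ : ℕ) else 0) = (p : ℕ) :=
            hv1 (p : ℕ) hp
          rw [dif_pos (show (p : ℕ) < m by omega)] at hval
          have hpa : p = a ⟨(p : ℕ), by omega⟩ := Fin.ext (by rw [hval])
          have hB := hBi ⟨(p : ℕ), by omega⟩
          simp only [Fin.val_mk] at hB
          have e := congrArg (fun x => ((σ x) : ℕ)) hpa
          omega
        · intro p hp1 hp2
          have hval : (if h : (p : ℕ) - 1 < m then (a ⟨(p : ℕ) - 1, h⟩ : ℕ) else 0)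
              = (p : ℕ) - 1 + 1 := hv2 ((p : ℕ) - 1) (by omega) (by omega)
          rw [dif_pos (show (p : ℕ) - 1 < m by omega)] at hval
          have hpa : p = a ⟨(p : ℕ) - 1, by omega⟩ := Fin.ext (by rw [hval]; omega)
          have hB := hBi ⟨(p : ℕ) - 1, by omega⟩
          simp only [Fin.val_mk] at hB
          have e := congrArg (fun x => ((σ x) : ℕ)) hpa
          omega

lemma PL_nest (m : ℕ) (hm : 1 ≤ m) (σ : Equiv.Perm (Fin (2 * m))) (h : PL m σ) :
    HasNesting (2 * m) m σ := by
  set A : Fin m → Fin (2 * m) := fun i => ⟨m + (i : ℕ), by have := i.isLt; omega⟩ with hA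
  have hval : ∀ i : Fin m, (A i : ℕ) = m + (i : ℕ) := fun i => rfl
  have hσ : ∀ i : Fin m, (σ (A i) : ℕ) = m - 1 - (i : ℕ) := by
    intro i
    have hlt := i.isLt
    have e := h (A i) (by rw [hval i]; omega)
    rw [hval i] at e
    omega
  refine ⟨A, Or.inr ⟨?_, ?_, ?_⟩⟩
  · intro i j hij
    rw [Fin.lt_def] at hij ⊢
    rw [hval i, hval j]
    omega
  · intro i j hij
    rw [Fin.lt_def] at hij
    show σ (A j) < σ (A i)
    rw [Fin.lt_def]
    rw [hσ i, hσ j]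
    have := j.isLt
    omega
  · intro i j
    show (σ (A i) : ℕ) < (A j : ℕ)
    rw [hσ i, hval j]
    have := i.isLt
    omega

lemma PU1_nest (m : ℕ) (hm : 1 ≤ m) (σ : Equiv.Perm (Fin (2 * m))) (h : PU1 m σ) :
    HasNesting (2 * m) m σ := by
  set A : Fin m → Fin (2 * m) := fun i => ⟨(i : ℕ), by have := i.isLt; omega⟩ with hA
  have hval : ∀ i : Fin m, (A i : ℕ) = (i : ℕ) := fun i => rfl
  have hσ : ∀ i : Fin m, (σ (A i) : ℕ) = 2 * m - 1 - (i : ℕ) := by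
    intro i
    have hlt := i.isLt
    have e := h (A i) (by rw [hval i]; omega)
    rw [hval i] at e
    omega
  refine ⟨A, Or.inl ⟨?_, ?_, ?_⟩⟩
  · intro i j hij
    rw [Fin.lt_def] at hij ⊢
    rw [hval i, hval j]
    omega
  · intro i j hij
    rw [Fin.lt_def] at hij
    show σ (A j) < σ (A i)
    rw [Fin.lt_def]
    rw [hσ i, hσ j]
    have := j.isLt
    omega
  · intro i j
    show (A i : ℕ) ≤ (σ (A j) : ℕ)
    rw [hσ j, hval i]
    have := i.isLt
    have := j.isLt
    omega

lemma PU2_nest (m : ℕ) (hm : 1 ≤ m) (σ : Equiv.Perm (Fin (2 * m))) (h : PU2 m σ) :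
    HasNesting (2 * m) m σ := by
  obtain ⟨h1, h2, h3⟩ := h
  set A : Fin m → Fin (2 * m) := fun i => ⟨(i : ℕ), by have := i.isLt; omega⟩ with hA
  have hval : ∀ i : Fin m, (A i : ℕ) = (i : ℕ) := fun i => rfl
  have hge : ∀ i : Fin m, m - 1 ≤ (σ (A i) : ℕ) := by
    intro i
    by_cases hc : (i : ℕ) = m - 1
    · have := h1 (A i) (by rw [hval i]; exact hc)
      omega
    · have := h2 (A i) (by rw [hval i]; have := i.isLt; omega)
      omega
  refine ⟨A, Or.inl ⟨?_, ?_, ?_⟩⟩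
  · intro i j hij
    rw [Fin.lt_def] at hij ⊢
    rw [hval i, hval j]
    omega
  · intro i j hij
    rw [Fin.lt_def] at hij
    show σ (A j) < σ (A i)
    rw [Fin.lt_def]
    have hjlt := j.isLt
    by_cases hc : (j : ℕ) = m - 1
    · have e1 := h1 (A j) (by rw [hval j]; exact hc)
      have e2 := h2 (A i) (by rw [hval i]; omega)
      omega
    · exact h3 (A i) (A j) (by rw [hval i, hval j]; omega) (by rw [hval j]; omega)
  · intro i j
    show (A i : ℕ) ≤ (σ (A j) : ℕ)
    have := hge j
    have := i.isLt
    rw [hval i]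
    omega

lemma PU3_nest (m : ℕ) (hm : 1 ≤ m) (σ : Equiv.Perm (Fin (2 * m))) (h : PU3 m σ) :
    HasNesting (2 * m) m σ := by
  obtain ⟨h0, j, hjm, g1, g2⟩ := h
  set A : Fin m → Fin (2 * m) := fun i =>
    ⟨if (i : ℕ) < j then (i : ℕ) else (i : ℕ) + 1, by have := i.isLt; split <;> omega⟩ with hA
  have hval : ∀ i : Fin m, (A i : ℕ) = if (i : ℕ) < j then (i : ℕ) else (i : ℕ) + 1 :=
    fun i => rfl
  have hσ : ∀ i : Fin m, (σ (A i) : ℕ) = 2 * m - 1 - (i : ℕ) := by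
    intro i
    have hlt := i.isLt
    by_cases hc : (i : ℕ) < j
    · have e := g1 (A i) (by rw [hval i, if_pos hc]; exact hc)
      rw [hval i, if_pos hc] at e
      omega
    · by_cases hm2 : (i : ℕ) + 1 = m
      · have e := h0 (A i) (by rw [hval i, if_neg hc]; exact hm2)
        omega
      · have e := g2 (A i) (by rw [hval i, if_neg hc]; omega)
          (by rw [hval i, if_neg hc]; omega)
        rw [hval i, if_neg hc] at e
        omega
  have hvle : ∀ i : Fin m, (A i : ℕ) ≤ m := by
    intro i
    have := i.isLt
    rw [hval i]
    split <;> omega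
  refine ⟨A, Or.inl ⟨?_, ?_, ?_⟩⟩
  · intro i j' hij
    rw [Fin.lt_def] at hij ⊢
    rw [hval i, hval j']
    split <;> split <;> omega
  · intro i j' hij
    rw [Fin.lt_def] at hij
    show σ (A j') < σ (A i)
    rw [Fin.lt_def, hσ i, hσ j']
    have := j'.isLt
    omega
  · intro i j'
    show (A i : ℕ) ≤ (σ (A j') : ℕ)
    have := hvle i
    have := hσ j'
    have := j'.isLt
    omega

lemma hasNesting_iff (m : ℕ) (hm : 1 ≤ m) (σ : Equiv.Perm (Fin (2 * m))) :
    HasNesting (2 * m) m σ ↔ (PL m σ ∨ PU1 m σ ∨ PU2 m σ ∨ PU3 m σ) := by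
  constructor
  · rintro ⟨a, h | h⟩
    · rcases upper_char m hm σ a h with h' | h' | h'
      · exact Or.inr (Or.inl h')
      · exact Or.inr (Or.inr (Or.inl h'))
      · exact Or.inr (Or.inr (Or.inr h'))
    · exact Or.inl (lower_char m hm σ a h)
  · rintro (h | h | h | h)
    · exact PL_nest m hm σ h
    · exact PU1_nest m hm σ h
    · exact PU2_nest m hm σ h
    · exact PU3_nest m hm σ h

/-- For even n = 2m with m ≥ 1, the number of permutations with nesting number
exactly m (the maximum) is 2(m+1)! − (m−1)! − 1. -/
theorem max_nesting_count_even (m : ℕ) (hm : 1 ≤ m) :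
    Nat.card {σ : Equiv.Perm (Fin (2 * m)) // nestNum (2 * m) σ = m}
      = 2 * Nat.factorial (m + 1) - Nat.factorial (m - 1) - 1 := by
  classical
  rw [Nat.card_eq_fintype_card, Fintype.card_subtype]
  have hiff : ∀ σ : Equiv.Perm (Fin (2 * m)),
      (nestNum (2 * m) σ = m ↔ ((PL m σ ∨ PU1 m σ) ∨ (PU2 m σ ∨ PU3 m σ))) := by
    intro σ
    rw [nestNum_eq_iff m σ, hasNesting_iff m hm σ]
    tauto
  rw [show ((univ : Finset (Equiv.Perm (Fin (2 * m)))).filter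
        (fun σ => nestNum (2 * m) σ = m))
      = ((univ : Finset (Equiv.Perm (Fin (2 * m)))).filter
          (fun σ => (PL m σ ∨ PU1 m σ) ∨ (PU2 m σ ∨ PU3 m σ))) from by
    ext σ
    simp only [Finset.mem_filter, Finset.mem_univ, true_and]
    exact hiff σ]
  set S1 := (univ : Finset (Equiv.Perm (Fin (2 * m)))).filter (fun σ => PL m σ) with hS1
  set S2 := (univ : Finset (Equiv.Perm (Fin (2 * m)))).filter (fun σ => PU1 m σ) with hS2
  set S3 := (univ : Finset (Equiv.Perm (Fin (2 * m)))).filter (fun σ => PU2 m σ) with hS3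
  set S4 := (univ : Finset (Equiv.Perm (Fin (2 * m)))).filter (fun σ => PU3 m σ) with hS4
  have hsplit : ((univ : Finset (Equiv.Perm (Fin (2 * m)))).filter
      (fun σ => (PL m σ ∨ PU1 m σ) ∨ (PU2 m σ ∨ PU3 m σ))) = (S1 ∪ S2) ∪ (S3 ∪ S4) := by
    rw [hS1, hS2, hS3, hS4]
    ext σ
    simp only [Finset.mem_filter, Finset.mem_univ, true_and, Finset.mem_union]
  rw [hsplit]
  -- cross intersection is empty
  have hcross : (S1 ∪ S2) ∩ (S3 ∪ S4) = ∅ := by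
    rw [Finset.eq_empty_iff_forall_notMem]
    intro σ hσ
    rw [Finset.mem_inter, Finset.mem_union, Finset.mem_union] at hσ
    obtain ⟨h12, h34⟩ := hσ
    rw [hS1, hS2, Finset.mem_filter, Finset.mem_filter] at h12
    rw [hS3, hS4, Finset.mem_filter, Finset.mem_filter] at h34
    rcases h12 with h12 | h12 <;> rcases h34 with h34 | h34
    · exact PL_PU2_empty m hm σ h12.2 h34.2
    · exact PL_PU3_empty m hm σ h12.2 h34.2
    · exact PU1_PU2_empty m hm σ h12.2 h34.2
    · exact PU1_PU3_empty m hm σ h12.2 h34.2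
  have e0 := Finset.card_union_add_card_inter (S1 ∪ S2) (S3 ∪ S4)
  rw [hcross, Finset.card_empty] at e0
  have e1 := Finset.card_union_add_card_inter S1 S2
  have e2 := Finset.card_union_add_card_inter S3 S4
  have i1 : (S1 ∩ S2).card = 1 := by
    rw [hS1, hS2, ← Finset.filter_and]
    exact card_SLU1 m hm
  have i2 : (S3 ∩ S4).card = (m - 1).factorial := by
    rw [hS3, hS4, ← Finset.filter_and]
    exact card_SU23 m hm
  have c1 : S1.card = m.factorial := card_SL m hm
  have c2 : S2.card = m.factorial := card_SU1 m hm
  have c3 : S3.card = m * m.factorial := card_SU2 m hm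
  have c4 : S4.card = m * m.factorial := card_SU3 m hm
  rw [c1, c2, i1] at e1
  rw [c3, c4, i2] at e2
  have f3 : Nat.factorial (m + 1) = m * m.factorial + m.factorial := by
    rw [Nat.factorial_succ]
    ring
  have hM1 : 1 ≤ m.factorial := Nat.factorial_pos m
  have hX1 : 1 ≤ (m - 1).factorial := Nat.factorial_pos (m - 1)
  have hXM : (m - 1).factorial ≤ m.factorial := Nat.factorial_le (by omega)
  have hMB : m.factorial ≤ m * m.factorial := Nat.le_mul_of_pos_left _ (by omega)
  omega
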